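/- arXiv:2209.00967 — 4 statements merged into one kernel-verified Lean document; each statement's English description precedes it below -/
import Mathlib

section
/- Ackermann membership satisfies the union axiom: for every natural number m there exists a natural number u such that for every natural number k, k ∈ₐ u if and only if there is some j with j ∈ₐ m and k ∈ₐ j. -/
/-!
Binary expansion `Finset.equivBitIndices : ℕ ≃ Finset ℕ` identifies `m` with the finite set of its
Ackermann members, so every finite set, in particular `⋃ j ∈ₐ m, {k | k ∈ₐ j}`, has a code.
-/

/-- Ackermann membership: `n ∈ₐ m` iff the `n`-th binary digit of `m` is `1`. -/
def AckMem (n m : ℕ) : Prop := Nat.testBit m n = true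

theorem ackMem_iff_mem_equivBitIndices {n m : ℕ} : AckMem n m ↔ n ∈ Finset.equivBitIndices m := by
  simp [AckMem]

theorem exists_ackMem_iff_mem (s : Finset ℕ) : ∃ u : ℕ, ∀ k : ℕ, AckMem k u ↔ k ∈ s :=
  ⟨Finset.equivBitIndices.symm s, fun k => by
    rw [ackMem_iff_mem_equivBitIndices, Equiv.apply_symm_apply]⟩

/-- Union for Ackermann membership. -/
theorem ackMem_union (m : ℕ) :
    ∃ u : ℕ, ∀ k : ℕ, AckMem k u ↔ ∃ j : ℕ, AckMem j m ∧ AckMem k j := by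
  obtain ⟨u, hu⟩ :=
    exists_ackMem_iff_mem ((Finset.equivBitIndices m).biUnion Finset.equivBitIndices)
  refine ⟨u, fun k => ?_⟩
  simp only [hu, Finset.mem_biUnion, ackMem_iff_mem_equivBitIndices]
end

section
/- Ackermann membership satisfies the separation scheme: for every natural number m and every predicate P : ℕ → Prop there exists a natural number c such that for every natural number k, k ∈ₐ c if and only if k ∈ₐ m and P k. -/
theorem Nat.testBit_sum_two_pow_iff (s : Finset ℕ) (k : ℕ) :
    (∑ i ∈ s, 2 ^ i).testBit k ↔ k ∈ s := by
  rw [← mem_bitIndices, ← List.mem_toFinset, Finset.toFinset_bitIndices_sum_two_pow]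

/-- Separation for Ackermann membership. -/
theorem ackMem_separation (m : ℕ) (P : ℕ → Prop) :
    ∃ c : ℕ, ∀ k : ℕ, AckMem k c ↔ AckMem k m ∧ P k := by
  classical
  refine ⟨∑ i ∈ m.bitIndices.toFinset with P i, 2 ^ i, fun k => ?_⟩
  simp only [AckMem, Nat.testBit_sum_two_pow_iff, Finset.mem_filter, List.mem_toFinset,
    Nat.mem_bitIndices]
end

section
/- Ackermann membership satisfies the axiom of transitive closure: for every natural number m there exists a natural number t such that m ∈ₐ t and t is transitive for Ackermann membership, i.e., for all a and b, if a ∈ₐ b and b ∈ₐ t then a ∈ₐ t. -/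
/-! The number `2 ^ (m + 1) - 1` codes the set `{0, …, m}`, which contains `m` and is transitive
because every Ackermann element of a number is smaller than it. -/

theorem AckMem.lt {a b : ℕ} (h : AckMem a b) : a < b :=
  Nat.lt_two_pow_self.trans_le (Nat.ge_two_pow_of_testBit h)

theorem ackMem_two_pow_sub_one_iff {a n : ℕ} : AckMem a (2 ^ n - 1) ↔ a < n := by
  simp [AckMem, Nat.testBit_two_pow_sub_one]

/-- Transitive closure for Ackermann membership: every `m` is an element of a
transitive `t`. -/
theorem ackMem_transClosure (m : ℕ) :
    ∃ t : ℕ, AckMem m t ∧ ∀ a b : ℕ, AckMem a b → AckMem b t → AckMem a t := by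
  refine ⟨2 ^ (m + 1) - 1, ackMem_two_pow_sub_one_iff.2 m.lt_succ_self, fun a b hab hbt => ?_⟩
  rw [ackMem_two_pow_sub_one_iff] at hbt ⊢
  exact hab.lt.trans hbt
end

section
/- There exists an injective function f : ℕ → ZFSet such that for all natural numbers n and m, n ∈ₐ m if and only if f n ∈ f m, and moreover for every m the set f m consists exactly of the elements f n for n ∈ₐ m (i.e., for every x, x ∈ f m if and only if x = f n for some n with n ∈ₐ m). In other words, the natural numbers equipped with Ackermann membership embed as an ∈-isomorphic copy of a transitive collection of hereditarily finite sets inside the sets of ZFC. -/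
theorem Nat.lt_of_testBit_eq_true {n m : ℕ} (h : m.testBit n = true) : n < m :=
  Nat.lt_two_pow_self.trans_le (Nat.ge_two_pow_of_testBit h)

universe u

noncomputable def ackSet : ℕ → ZFSet.{u} := fun m =>
  ZFSet.range fun n : {n : ℕ // m.testBit n = true} => ackSet n
decreasing_by exact Nat.lt_of_testBit_eq_true n.2

theorem mem_ackSet {m : ℕ} {x : ZFSet} :
    x ∈ ackSet m ↔ ∃ n : ℕ, m.testBit n = true ∧ x = ackSet n := by
  rw [ackSet, ZFSet.mem_range]
  exact ⟨fun ⟨⟨n, hn⟩, hx⟩ => ⟨n, hn, hx.symm⟩, fun ⟨n, hn, hx⟩ => ⟨⟨n, hn⟩, hx.symm⟩⟩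

theorem ackSet_mem_ackSet_of_testBit {n m : ℕ} (h : m.testBit n = true) :
    ackSet n ∈ ackSet m :=
  mem_ackSet.2 ⟨n, h, rfl⟩

theorem ackSet_injective : Function.Injective ackSet := by
  intro a
  induction a using Nat.strong_induction_on with
  | _ a ih =>
    intro b hab
    refine Nat.eq_of_testBit_eq fun n => Bool.eq_iff_iff.2 ⟨fun ha => ?_, fun hb => ?_⟩
    · obtain ⟨k, hk, hnk⟩ := mem_ackSet.1 (hab ▸ ackSet_mem_ackSet_of_testBit ha)
      rwa [ih n (Nat.lt_of_testBit_eq_true ha) hnk]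
    · obtain ⟨k, hk, hnk⟩ := mem_ackSet.1 (hab ▸ ackSet_mem_ackSet_of_testBit hb)
      rwa [← ih k (Nat.lt_of_testBit_eq_true hk) hnk.symm]

theorem ackSet_mem_ackSet_iff {n m : ℕ} : ackSet n ∈ ackSet m ↔ m.testBit n = true := by
  refine ⟨fun h => ?_, ackSet_mem_ackSet_of_testBit⟩
  obtain ⟨k, hk, hnk⟩ := mem_ackSet.1 h
  rwa [ackSet_injective hnk]

/-- The natural numbers with Ackermann membership embed as a transitive,
∈-isomorphic copy of the hereditarily finite sets inside `ZFSet`. -/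
theorem ackMem_embeds_in_zfset :
    ∃ f : ℕ → ZFSet, Function.Injective f ∧
      (∀ n m : ℕ, AckMem n m ↔ f n ∈ f m) ∧
      (∀ (m : ℕ) (x : ZFSet), x ∈ f m ↔ ∃ n : ℕ, AckMem n m ∧ x = f n) :=
  ⟨ackSet, ackSet_injective, fun _ _ => ackSet_mem_ackSet_iff.symm, fun _ _ => mem_ackSet⟩
end
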